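/- Let G = (V,E) be a d-regular graph with d ≥ 3, equipped with an edge-signing w : E → {±1}; let A be its signed adjacency matrix and B its signed non-backtracking matrix. If A has an eigenvalue of magnitude 2√(d−1) + ε for some ε ≥ 0, then B has an eigenvalue of magnitude √(d−1) + √ε·√(√(d−1) + ε/4) + ε/2. -/

import Mathlib

/-!
If `A x = μ x` and `ν ≠ 0` is a root of `ν² - μν + (d - 1) = 0`, the function on darts
`y (u, v) = x v - ν⁻¹ w(u, v) x u` satisfies `B y = ν y`: the non-backtracking continuations of
`(u, v)` contribute `(A x) v - (d - 1) ν⁻¹ x v - w(u, v) x u`. As `A` is Hermitian, `μ = ±m` with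
`m = 2√(d-1) + ε` real, and `√(d-1) + √ε √(√(d-1) + ε/4) + ε/2` is the larger root of
`t² - m t + (d - 1)`, which exceeds `1`. Finally `y ≠ 0`, since `y = 0` forces `ν² = 1` at any
vertex where `x` does not vanish.
-/

open scoped Classical

namespace NearRamanujan

variable {V : Type*} [Fintype V] [DecidableEq V]

/-- The signed adjacency matrix of `G` equipped with the edge-signing `σ`
(`σ e = true` meaning sign `+1`, `σ e = false` meaning sign `-1`). -/
noncomputable def signedAdjT (G : SimpleGraph V) (σ : Sym2 V → Bool) : Matrix V V ℂ :=
  fun u v => if G.Adj u v then (if σ s(u, v) then 1 else -1) else 0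

/-- The signed non-backtracking matrix of `G` equipped with the edge-signing `σ`,
indexed by the darts (directed edges) of `G`. -/
noncomputable def nbMatrixT (G : SimpleGraph V) (σ : Sym2 V → Bool) : Matrix G.Dart G.Dart ℂ :=
  fun e f => if e.snd = f.fst ∧ f.snd ≠ e.fst then (if σ s(f.fst, f.snd) then 1 else -1) else 0

end NearRamanujan

open scoped Matrix

theorem Matrix.mem_spectrum_iff_exists_mulVec_eq_smul {K n : Type*} [Field K] [Fintype n]
    [DecidableEq n] {M : Matrix n n K} {μ : K} :
    μ ∈ spectrum K M ↔ ∃ x ≠ 0, M *ᵥ x = μ • x := by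
  rw [← Matrix.spectrum_toLin', ← Module.End.hasEigenvalue_iff_mem_spectrum]
  constructor
  · intro h
    obtain ⟨x, hx⟩ := h.exists_hasEigenvector
    exact ⟨x, hx.2, by simpa using Module.End.mem_eigenspace_iff.mp hx.1⟩
  · rintro ⟨x, hx, h⟩
    exact Module.End.hasEigenvalue_of_hasEigenvector
      ⟨Module.End.mem_eigenspace_iff.mpr (by simpa using h), hx⟩

theorem SimpleGraph.sum_dart_fst_eq {V M : Type*} [Fintype V] [DecidableEq V] [AddCommMonoid M]
    (G : SimpleGraph V) [DecidableRel G.Adj] (u : V) (F : V → M) :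
    ∑ e : G.Dart with e.fst = u, F e.snd = ∑ v ∈ G.neighborFinset u, F v := by
  refine Finset.sum_bij (fun e _ => e.snd) ?_ ?_ ?_ (fun _ _ => rfl)
  · intro e he
    simp only [Finset.mem_filter, Finset.mem_univ, true_and] at he
    exact (G.mem_neighborFinset _ _).mpr (he ▸ e.adj)
  · intro e₁ he₁ e₂ he₂ h
    simp only [Finset.mem_filter, Finset.mem_univ, true_and] at he₁ he₂
    exact SimpleGraph.Dart.ext _ _ (Prod.ext (he₁.trans he₂.symm) h)
  · intro v hv
    exact ⟨⟨(u, v), (G.mem_neighborFinset _ _).mp hv⟩, by simp, rfl⟩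

theorem exists_sq_sub_mul_add_eq_zero_of_abs_eq {a m r c : ℝ} (ha : |a| = m)
    (hr : r ^ 2 - m * r + c = 0) : ∃ b, |b| = |r| ∧ b ^ 2 - a * b + c = 0 := by
  rcases abs_choice a with h | h
  · exact ⟨r, rfl, by rw [← ha, h] at hr; exact hr⟩
  · exact ⟨-r, abs_neg r, by rw [← ha, h] at hr; linear_combination hr⟩

theorem quadratic_eq_zero_of_eq_add_sqrt_mul_sqrt {s ε r : ℝ} (hs : 0 ≤ s) (hε : 0 ≤ ε)
    (hr : r = s + √ε * √(s + ε / 4) + ε / 2) : r ^ 2 - (2 * s + ε) * r + s ^ 2 = 0 := by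
  have hsq : (√ε * √(s + ε / 4)) ^ 2 = ε * (s + ε / 4) := by
    rw [mul_pow, Real.sq_sqrt hε, Real.sq_sqrt (by positivity)]
  rw [hr]
  linear_combination hsq

namespace NearRamanujan

variable {V : Type*}

def edgeSign (σ : Sym2 V → Bool) (u v : V) : ℂ := if σ s(u, v) then 1 else -1

theorem edgeSign_comm (σ : Sym2 V → Bool) (u v : V) : edgeSign σ u v = edgeSign σ v u := by
  rw [edgeSign, edgeSign, Sym2.eq_swap]

theorem edgeSign_mul_self (σ : Sym2 V → Bool) (u v : V) :
    edgeSign σ u v * edgeSign σ u v = 1 := by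
  unfold edgeSign; split <;> norm_num

theorem edgeSign_star (σ : Sym2 V → Bool) (u v : V) :
    star (edgeSign σ u v) = edgeSign σ u v := by
  unfold edgeSign; split <;> simp

theorem signedAdjT_isHermitian (G : SimpleGraph V) (σ : Sym2 V → Bool) :
    (signedAdjT G σ).IsHermitian := by
  ext u v
  simp only [Matrix.conjTranspose_apply, signedAdjT, G.adj_comm v u]
  split
  · exact (edgeSign_star σ v u).trans (edgeSign_comm σ v u)
  · exact star_zero ℂ

noncomputable def liftToDarts (G : SimpleGraph V) (σ : Sym2 V → Bool) (ν : ℂ) (x : V → ℂ) :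
    G.Dart → ℂ :=
  fun e => x e.snd - ν⁻¹ * edgeSign σ e.fst e.snd * x e.fst

theorem liftToDarts_ne_zero {G : SimpleGraph V} (hG : ∀ v, ∃ u, G.Adj v u) (σ : Sym2 V → Bool)
    {ν : ℂ} {x : V → ℂ} (hx : x ≠ 0) (hν : ν ^ 2 ≠ 1) : liftToDarts G σ ν x ≠ 0 := by
  intro hlift
  obtain ⟨v, hv⟩ := Function.ne_iff.mp hx
  obtain ⟨u, hvu⟩ := hG v
  have h₁ : x v - ν⁻¹ * edgeSign σ u v * x u = 0 := congrFun hlift ⟨(u, v), hvu.symm⟩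
  have h₂ : x u - ν⁻¹ * edgeSign σ v u * x v = 0 := congrFun hlift ⟨(v, u), hvu⟩
  rw [edgeSign_comm σ v u] at h₂
  have h : (1 - ν⁻¹ ^ 2) * x v = 0 := by
    linear_combination h₁ + ν⁻¹ * edgeSign σ u v * h₂ + ν⁻¹ ^ 2 * x v * edgeSign_mul_self σ u v
  rw [mul_eq_zero, sub_eq_zero, eq_comm, inv_pow, inv_eq_one] at h
  exact h.elim hν hv

variable [Fintype V]

theorem signedAdjT_mulVec_apply (G : SimpleGraph V) (σ : Sym2 V → Bool) (x : V → ℂ) (u : V) :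
    (signedAdjT G σ *ᵥ x) u = ∑ v ∈ G.neighborFinset u, edgeSign σ u v * x v := by
  rw [Matrix.mulVec, dotProduct, G.neighborFinset_eq_filter, Finset.sum_filter]
  exact Finset.sum_congr rfl fun v _ => by unfold signedAdjT edgeSign; split_ifs <;> simp

variable [DecidableEq V]

theorem nbMatrixT_mulVec_apply (G : SimpleGraph V) (σ : Sym2 V → Bool) (g : V → V → ℂ)
    (e : G.Dart) :
    (nbMatrixT G σ *ᵥ fun f => g f.fst f.snd) e
      = ∑ v ∈ (G.neighborFinset e.snd).erase e.fst, edgeSign σ e.snd v * g e.snd v := by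
  have hterm : ∀ f : G.Dart, nbMatrixT G σ e f * g f.fst f.snd
      = if f.fst = e.snd then
          (if f.snd ≠ e.fst then edgeSign σ e.snd f.snd * g e.snd f.snd else 0) else 0 := by
    intro f
    by_cases h₁ : f.fst = e.snd
    · by_cases h₂ : f.snd = e.fst
      · simp [nbMatrixT, h₂]
      · rw [nbMatrixT, if_pos ⟨h₁.symm, h₂⟩, if_pos h₁, if_pos h₂, h₁, edgeSign]
    · rw [nbMatrixT, if_neg fun h => h₁ h.1.symm, if_neg h₁, zero_mul]
  rw [Matrix.mulVec, dotProduct, Finset.sum_congr rfl fun f _ => hterm f, ← Finset.sum_filter]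
  rw [G.sum_dart_fst_eq e.snd (fun v => if v ≠ e.fst then edgeSign σ e.snd v * g e.snd v else 0)]
  rw [← Finset.sum_filter, Finset.filter_ne']

theorem nbMatrixT_mulVec_liftToDarts {G : SimpleGraph V} {d : ℕ} (hreg : G.IsRegularOfDegree d)
    (σ : Sym2 V → Bool) {μ ν : ℂ} {x : V → ℂ} (hx : signedAdjT G σ *ᵥ x = μ • x) (hν : ν ≠ 0)
    (hquad : ν ^ 2 - μ * ν + (d - 1) = 0) :
    nbMatrixT G σ *ᵥ liftToDarts G σ ν x = ν • liftToDarts G σ ν x := by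
  funext e
  obtain ⟨⟨u, w⟩, huw⟩ := e
  have hu : u ∈ G.neighborFinset w := (G.mem_neighborFinset w u).mpr huw.symm
  calc (nbMatrixT G σ *ᵥ liftToDarts G σ ν x) ⟨(u, w), huw⟩
      = ∑ v ∈ (G.neighborFinset w).erase u,
          edgeSign σ w v * (x v - ν⁻¹ * edgeSign σ w v * x w) :=
        nbMatrixT_mulVec_apply G σ (fun u v => x v - ν⁻¹ * edgeSign σ u v * x u) _
    _ = ∑ v ∈ (G.neighborFinset w).erase u, (edgeSign σ w v * x v - ν⁻¹ * x w) :=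
        Finset.sum_congr rfl fun v _ => by
          linear_combination (-ν⁻¹ * x w) * edgeSign_mul_self σ w v
    _ = ∑ v ∈ G.neighborFinset w, (edgeSign σ w v * x v - ν⁻¹ * x w)
          - (edgeSign σ w u * x u - ν⁻¹ * x w) := Finset.sum_erase_eq_sub hu
    _ = μ * x w - d * ν⁻¹ * x w - edgeSign σ w u * x u + ν⁻¹ * x w := by
        rw [Finset.sum_sub_distrib, ← signedAdjT_mulVec_apply, hx, Finset.sum_const,
          G.card_neighborFinset_eq_degree, hreg w, Pi.smul_apply, nsmul_eq_mul, smul_eq_mul]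
        ring
    _ = ν * (x w - ν⁻¹ * edgeSign σ u w * x u) := by
        rw [edgeSign_comm σ w u]
        field_simp
        linear_combination -(x w) * hquad

/-- Corollary 2.12.  Let `G` be a `d`-regular graph (`d ≥ 3`) with an
edge-signing, `A` its signed adjacency matrix and `B` its signed non-backtracking matrix.
If `A` has an eigenvalue of magnitude `2√(d−1) + ε` for some `ε ≥ 0`, then `B` has an
eigenvalue of magnitude `√(d−1) + √ε·√(√(d−1) + ε/4) + ε/2`. -/
theorem nb_eigenvalue_of_adjacency_eigenvalue
    (G : SimpleGraph V) (d : ℕ) (hd : 3 ≤ d) (hreg : ∀ v, G.degree v = d)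
    (σ : Sym2 V → Bool) (ε : ℝ) (hε : 0 ≤ ε)
    (hA : ∃ μ ∈ spectrum ℂ (signedAdjT G σ),
            ‖μ‖ = 2 * Real.sqrt ((d : ℝ) - 1) + ε) :
    ∃ ν ∈ spectrum ℂ (nbMatrixT G σ),
      ‖ν‖
        = Real.sqrt ((d : ℝ) - 1)
            + Real.sqrt ε * Real.sqrt (Real.sqrt ((d : ℝ) - 1) + ε / 4) + ε / 2 := by
  obtain ⟨μ, hμ, hμ_norm⟩ := hA
  obtain ⟨a, -, rfl⟩ := (signedAdjT_isHermitian G σ).spectrum_eq_image_range ▸ hμ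
  obtain ⟨x, hx, hAx⟩ := Matrix.mem_spectrum_iff_exists_mulVec_eq_smul.mp hμ
  set s := √((d : ℝ) - 1)
  set r := s + √ε * √(s + ε / 4) + ε / 2 with hr
  have hd' : (2 : ℝ) ≤ d - 1 := by
    have : (3 : ℝ) ≤ d := by exact_mod_cast hd
    linarith
  have hs : 1 < s := (Real.lt_sqrt zero_le_one).mpr (by linarith)
  have hr_gt : 1 < r := by
    have := mul_nonneg (Real.sqrt_nonneg ε) (Real.sqrt_nonneg (s + ε / 4))
    linarith
  have hr_root : r ^ 2 - (2 * s + ε) * r + ((d : ℝ) - 1) = 0 := by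
    rw [← Real.sq_sqrt (by linarith : (0 : ℝ) ≤ d - 1)]
    exact quadratic_eq_zero_of_eq_add_sqrt_mul_sqrt (by linarith) hε hr
  obtain ⟨b, hb_abs, hb_root⟩ :=
    exists_sq_sub_mul_add_eq_zero_of_abs_eq (by simpa using hμ_norm) hr_root
  rw [abs_of_pos (show 0 < r by linarith)] at hb_abs
  have hb_sq : (b : ℂ) ^ 2 ≠ 1 := by
    exact_mod_cast ((one_lt_sq_iff_one_lt_abs b).mpr (hb_abs ▸ hr_gt)).ne'
  have hb_ne : (b : ℂ) ≠ 0 := Complex.ofReal_ne_zero.mpr (abs_pos.mp (by linarith))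
  have hG : ∀ v, ∃ u, G.Adj v u := fun v =>
    (G.degree_pos_iff_exists_adj v).mp (by rw [hreg v]; omega)
  refine ⟨b, Matrix.mem_spectrum_iff_exists_mulVec_eq_smul.mpr
    ⟨liftToDarts G σ b x, liftToDarts_ne_zero hG σ hx hb_sq,
      nbMatrixT_mulVec_liftToDarts hreg σ hAx hb_ne
        (by simpa using congrArg ((↑) : ℝ → ℂ) hb_root)⟩, ?_⟩
  rw [Complex.norm_real, Real.norm_eq_abs, hb_abs]

end NearRamanujan
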